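/- Let Λ be a strongly connected finite k-graph. Then Λ is aperiodic if and only if Per Λ = {0}. -/

import Mathlib

/-- A higher-rank graph (`k`-graph): a countable category with a degree functor
`d : Λ → ℕ^k` satisfying the unique factorisation property.  Morphisms are called
paths; the vertices are the paths of degree `0` (the identity morphisms).
`r` and `s` are the codomain (range) and domain (source) maps.  By convention
`Λ^{e_i} ≠ ∅` for each standard generator `e_i` of `ℕ^k`. -/
structure KGraph (k : ℕ) where
  Path : Type
  countable : Countable Path
  d : Path → Fin k → ℕ
  r : Path → Path
  s : Path → Path
  d_r : ∀ lam, d (r lam) = 0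
  d_s : ∀ lam, d (s lam) = 0
  r_vertex : ∀ v, d v = 0 → r v = v
  s_vertex : ∀ v, d v = 0 → s v = v
  comp : ∀ μ ν : Path, s μ = r ν → Path
  r_comp : ∀ μ ν h, r (comp μ ν h) = r μ
  s_comp : ∀ μ ν h, s (comp μ ν h) = s ν
  d_comp : ∀ μ ν h, d (comp μ ν h) = d μ + d ν
  id_comp : ∀ lam (h : s (r lam) = r lam), comp (r lam) lam h = lam
  comp_id : ∀ lam (h : s lam = r (s lam)), comp lam (s lam) h = lam
  assoc : ∀ μ ν τ (h1 : s μ = r ν) (h2 : s ν = r τ)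
      (h3 : s (comp μ ν h1) = r τ) (h4 : s μ = r (comp ν τ h2)),
      comp (comp μ ν h1) τ h3 = comp μ (comp ν τ h2) h4
  factor : ∀ (lam : Path) (m n : Fin k → ℕ), d lam = m + n →
      ∃! μν : Path × Path, ∃ h : s μν.1 = r μν.2,
        d μν.1 = m ∧ d μν.2 = n ∧ comp μν.1 μν.2 h = lam
  edge_nonempty : ∀ i : Fin k, ∃ lam, d lam = Pi.single i 1

namespace KGraph

variable {k : ℕ}

/-- The vertices of a `k`-graph: the paths of degree `0`. -/
abbrev Vertex (Λ : KGraph k) : Type := {v : Λ.Path // Λ.d v = 0}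

/-- A `k`-graph is finite if `Λ^n` is finite for every `n ∈ ℕ^k`. -/
def IsFinite (Λ : KGraph k) : Prop := ∀ n : Fin k → ℕ, {lam : Λ.Path | Λ.d lam = n}.Finite

/-- A `k`-graph is strongly connected if `vΛw ≠ ∅` for all vertices `v, w`. -/
def StronglyConnected (Λ : KGraph k) : Prop :=
  ∀ v w : Λ.Path, Λ.d v = 0 → Λ.d w = 0 → ∃ lam : Λ.Path, Λ.r lam = v ∧ Λ.s lam = w

/-- `Λ^min(μ,ν) = {(α,β) : μα = νβ, d(μα) = d(μ) ∨ d(ν)}`. -/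
def minSet (Λ : KGraph k) (μ ν : Λ.Path) : Set (Λ.Path × Λ.Path) :=
  {p | ∃ (h1 : Λ.s μ = Λ.r p.1) (h2 : Λ.s ν = Λ.r p.2),
      Λ.comp μ p.1 h1 = Λ.comp ν p.2 h2 ∧ Λ.d μ + Λ.d p.1 = Λ.d μ ⊔ Λ.d ν}

end KGraph

/-- An infinite path in a `k`-graph `Λ`: a degree-preserving functor `x : Ω_k → Λ`,
recorded by its values `x(m,n)` for `m ≤ n` in `ℕ^k`. -/
structure InfinitePath {k : ℕ} (Λ : KGraph k) where
  toFun : ∀ m n : Fin k → ℕ, m ≤ n → Λ.Path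
  d_eq : ∀ m n h, Λ.d (toFun m n h) = n - m
  src : ∀ m n h, Λ.s (toFun m n h) = toFun n n le_rfl
  rng : ∀ m n h, Λ.r (toFun m n h) = toFun m m le_rfl
  comp_eq : ∀ m n p (h1 : m ≤ n) (h2 : n ≤ p)
      (hc : Λ.s (toFun m n h1) = Λ.r (toFun n p h2)),
      Λ.comp (toFun m n h1) (toFun n p h2) hc = toFun m p (h1.trans h2)

namespace InfinitePath

variable {k : ℕ} {Λ : KGraph k}

/-- The shift map `σ^n` on the infinite-path space, `σ^n(x)(p,q) = x(n+p, n+q)`. -/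
def shift (x : InfinitePath Λ) (n : Fin k → ℕ) : InfinitePath Λ where
  toFun p q h := x.toFun (n + p) (n + q) (add_le_add le_rfl h)
  d_eq p q h := by
    rw [x.d_eq]
    funext i
    exact Nat.add_sub_add_left (n i) (q i) (p i)
  src p q h := x.src _ _ _
  rng p q h := x.rng _ _ _
  comp_eq p q t h1 h2 hc := x.comp_eq _ _ _ _ _ hc

/-- The range `r(x) = x(0,0)` of an infinite path. -/
def range (x : InfinitePath Λ) : Λ.Path := x.toFun 0 0 le_rfl

end InfinitePath

/-- `ExtEq Λ lam y x` says that `y = lam · x`, i.e. `y(0, d(lam)) = lam` and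
`σ^{d(lam)}(y) = x`.  (Such an extension is unique when it exists.) -/
def KGraph.ExtEq {k : ℕ} (Λ : KGraph k) (lam : Λ.Path) (y x : InfinitePath Λ) : Prop :=
  y.toFun 0 (Λ.d lam) (zero_le) = lam ∧ y.shift (Λ.d lam) = x

/-- `Λ.IsTheta m n μ ν` says that `μ ∈ Λ^m`, `ν ∈ Λ^n`, and `μx = νx` for every
infinite path `x ∈ Z(s(μ))`; i.e. `ν = θ_{m,n}(μ)`. -/
def KGraph.IsTheta {k : ℕ} (Λ : KGraph k) (m n : Fin k → ℕ) (μ ν : Λ.Path) : Prop :=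
  Λ.d μ = m ∧ Λ.d ν = n ∧
    ∀ x : InfinitePath Λ, x.range = Λ.s μ →
      ∃ y : InfinitePath Λ, Λ.ExtEq μ y x ∧ Λ.ExtEq ν y x

/-- The periodicity group `Per Λ = {m − n : σ^m(x) = σ^n(x) for all x ∈ Λ^∞} ⊆ ℤ^k`. -/
def KGraph.Per {k : ℕ} (Λ : KGraph k) : Set (Fin k → ℤ) :=
  {g | ∃ m n : Fin k → ℕ, (∀ i, (m i : ℤ) - n i = g i) ∧
      ∀ x : InfinitePath Λ, x.shift m = x.shift n}

/-- `Λ` is aperiodic if every vertex `v` admits `x ∈ Z(v)` with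
`σ^m(x) ≠ σ^n(x)` for all `m ≠ n` in `ℕ^k`. -/
def KGraph.Aperiodic {k : ℕ} (Λ : KGraph k) : Prop :=
  ∀ v : Λ.Path, Λ.d v = 0 → ∃ x : InfinitePath Λ, x.range = v ∧
    ∀ m n : Fin k → ℕ, m ≠ n → x.shift m ≠ x.shift n


/-!
If `Per Λ = {0}`, then for every `p ≠ q` some infinite path `y` has `σ^p y ≠ σ^q y`. Given a
finite path `μ`, strong connectivity provides `α` from `s(μ)` to `r(y)`, and `μαy` still
separates `σ^p` from `σ^q`. The separation is already visible on a finite initial segment of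
`μαy`, so `μ` extends to a finite path all of whose infinite extensions separate `σ^p` and
`σ^q`. Enumerating the countably many pairs `p ≠ q` and extending step by step from a vertex `v`
gives an increasing chain of finite paths whose limit is an aperiodic path at `v`.
-/

namespace KGraph

variable {k : ℕ} {Λ : KGraph k}

theorem comp_cancel {μ ν μ' ν' : Λ.Path} {h : Λ.s μ = Λ.r ν} {h' : Λ.s μ' = Λ.r ν'}
    (heq : Λ.comp μ ν h = Λ.comp μ' ν' h') (hd : Λ.d μ = Λ.d μ') :
    μ = μ' ∧ ν = ν' := by
  have hd' : Λ.d (Λ.comp μ' ν' h') = Λ.d μ' + Λ.d ν' := Λ.d_comp _ _ _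
  have hν : Λ.d ν = Λ.d ν' := by
    have := Λ.d_comp μ ν h
    rw [heq, hd', hd] at this
    exact (add_left_cancel this).symm
  exact Prod.ext_iff.mp ((Λ.factor _ _ _ hd').unique (y₁ := (μ, ν)) (y₂ := (μ', ν'))
    ⟨h, hd, hν, heq⟩ ⟨h', rfl, rfl, rfl⟩)

theorem comp_left_cancel {μ ν ν' : Λ.Path} {h : Λ.s μ = Λ.r ν} {h' : Λ.s μ = Λ.r ν'}
    (heq : Λ.comp μ ν h = Λ.comp μ ν' h') : ν = ν' :=
  (comp_cancel heq rfl).2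

theorem comp_congr {μ ν μ' ν' : Λ.Path} (hμ : μ = μ') (hν : ν = ν')
    {h : Λ.s μ = Λ.r ν} {h' : Λ.s μ' = Λ.r ν'} : Λ.comp μ ν h = Λ.comp μ' ν' h' := by
  subst hμ hν
  rfl

theorem comp_assoc {μ ν τ : Λ.Path} (h₁ : Λ.s μ = Λ.r ν) (h₂ : Λ.s ν = Λ.r τ) :
    Λ.comp (Λ.comp μ ν h₁) τ (by rwa [Λ.s_comp]) =
      Λ.comp μ (Λ.comp ν τ h₂) (by rwa [Λ.r_comp]) :=
  Λ.assoc _ _ _ _ _ _ _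

theorem s_eq_r_s (μ : Λ.Path) : Λ.s μ = Λ.r (Λ.s μ) :=
  (Λ.r_vertex _ (Λ.d_s μ)).symm

variable (Λ) in
def IsPrefix (μ lam : Λ.Path) : Prop :=
  ∃ ν h, Λ.comp μ ν h = lam

theorem IsPrefix.rfl {μ : Λ.Path} : Λ.IsPrefix μ μ :=
  ⟨_, s_eq_r_s μ, Λ.comp_id μ _⟩

theorem IsPrefix.trans {μ lam ρ : Λ.Path} (h₁ : Λ.IsPrefix μ lam)
    (h₂ : Λ.IsPrefix lam ρ) : Λ.IsPrefix μ ρ := by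
  obtain ⟨α, hα, rfl⟩ := h₁
  obtain ⟨β, hβ, rfl⟩ := h₂
  exact ⟨Λ.comp α β (by rwa [Λ.s_comp] at hβ), by rwa [Λ.r_comp], (comp_assoc _ _).symm⟩

instance : Std.Refl Λ.IsPrefix := ⟨fun _ => IsPrefix.rfl⟩

instance : IsTrans Λ.Path Λ.IsPrefix := ⟨fun _ _ _ => IsPrefix.trans⟩

theorem exists_isPrefix_of_le {lam : Λ.Path} {n : Fin k → ℕ} (hn : n ≤ Λ.d lam) :
    ∃ μ, Λ.IsPrefix μ lam ∧ Λ.d μ = n := by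
  obtain ⟨⟨μ, ν⟩, ⟨h, hμ, -, hcomp⟩, -⟩ :=
    Λ.factor lam n _ (add_tsub_cancel_of_le hn).symm
  exact ⟨μ, ⟨ν, h, hcomp⟩, hμ⟩

theorem IsPrefix.eq_of_d_eq {μ μ' lam : Λ.Path} (h : Λ.IsPrefix μ lam)
    (h' : Λ.IsPrefix μ' lam) (hd : Λ.d μ = Λ.d μ') : μ = μ' := by
  obtain ⟨_, _, hcomp⟩ := h
  obtain ⟨_, _, hcomp'⟩ := h'
  exact (comp_cancel (hcomp.trans hcomp'.symm) hd).1

end KGraph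

namespace InfinitePath

open KGraph

variable {k : ℕ} {Λ : KGraph k}

@[ext]
theorem ext {x y : InfinitePath Λ} (h : ∀ m n hmn, x.toFun m n hmn = y.toFun m n hmn) :
    x = y := by
  obtain ⟨f, _⟩ := x
  obtain ⟨g, _⟩ := y
  congr
  funext m n hmn
  exact h m n hmn

theorem toFun_congr (x : InfinitePath Λ) {m n m' n' : Fin k → ℕ} (hm : m = m') (hn : n = n')
    {h : m ≤ n} {h' : m' ≤ n'} : x.toFun m n h = x.toFun m' n' h' := by
  subst hm hn
  rfl

theorem shift_shift (x : InfinitePath Λ) (a b : Fin k → ℕ) :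
    (x.shift a).shift b = x.shift (a + b) := by
  ext m n hmn
  exact x.toFun_congr (add_assoc a b m).symm (add_assoc a b n).symm

theorem s_toFun_eq_r_toFun (x : InfinitePath Λ) {l m n : Fin k → ℕ} (h₁ : l ≤ m)
    (h₂ : m ≤ n) : Λ.s (x.toFun l m h₁) = Λ.r (x.toFun m n h₂) := by
  rw [x.src, x.rng]

theorem comp_toFun (x : InfinitePath Λ) {l m n : Fin k → ℕ} (h₁ : l ≤ m) (h₂ : m ≤ n) :
    Λ.comp (x.toFun l m h₁) (x.toFun m n h₂) (x.s_toFun_eq_r_toFun h₁ h₂) =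
      x.toFun l n (h₁.trans h₂) :=
  x.comp_eq _ _ _ _ _ _

theorem isPrefix_toFun_zero (x : InfinitePath Λ) {m n : Fin k → ℕ} (h : m ≤ n) :
    Λ.IsPrefix (x.toFun 0 m zero_le) (x.toFun 0 n zero_le) :=
  ⟨_, _, x.comp_toFun zero_le h⟩

theorem eq_toFun_of_comp_eq (x : InfinitePath Λ) {m n : Fin k → ℕ} (hmn : m ≤ n)
    {ν : Λ.Path} {hc : Λ.s (x.toFun 0 m zero_le) = Λ.r ν}
    (h : Λ.comp (x.toFun 0 m zero_le) ν hc = x.toFun 0 n zero_le) : ν = x.toFun m n hmn :=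
  comp_left_cancel (h.trans (x.comp_toFun zero_le hmn).symm)

theorem toFun_eq_of_toFun_zero_eq {x y : InfinitePath Λ} {m n N : Fin k → ℕ}
    (hN : x.toFun 0 N zero_le = y.toFun 0 N zero_le) (hmn : m ≤ n) (hnN : n ≤ N) :
    x.toFun m n hmn = y.toFun m n hmn := by
  have hn : x.toFun 0 n zero_le = y.toFun 0 n zero_le :=
    (comp_cancel ((x.comp_toFun zero_le hnN).trans (hN.trans (y.comp_toFun zero_le hnN).symm))
      (by rw [x.d_eq, y.d_eq])).1
  exact (comp_cancel ((x.comp_toFun zero_le hmn).trans (hn.trans (y.comp_toFun zero_le hmn).symm))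
    (by rw [x.d_eq, y.d_eq])).2

theorem exists_forall_shift_ne_of_toFun_zero_eq {x : InfinitePath Λ} {p q : Fin k → ℕ}
    (hx : x.shift p ≠ x.shift q) (M : Fin k → ℕ) :
    ∃ N, M ≤ N ∧ ∀ y : InfinitePath Λ,
      y.toFun 0 N zero_le = x.toFun 0 N zero_le → y.shift p ≠ y.shift q := by
  obtain ⟨a, b, hab, hne⟩ :
      ∃ a b hab, (x.shift p).toFun a b hab ≠ (x.shift q).toFun a b hab := by
    by_contra! h
    exact hx (ext h)
  refine ⟨M ⊔ (p + b) ⊔ (q + b), le_sup_left.trans le_sup_left, fun y hy hyx => hne ?_⟩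
  have hpq := congrArg (fun z : InfinitePath Λ => z.toFun a b hab) hyx
  dsimp only [shift] at hpq ⊢
  rwa [toFun_eq_of_toFun_zero_eq hy _ (le_sup_right.trans le_sup_left),
    toFun_eq_of_toFun_zero_eq hy _ le_sup_right] at hpq

theorem exists_toFun_zero_eq (f : (Fin k → ℕ) → Λ.Path) (hd : ∀ n, Λ.d (f n) = n)
    (hf : ∀ m n, m ≤ n → Λ.IsPrefix (f m) (f n)) :
    ∃ x : InfinitePath Λ, ∀ n, x.toFun 0 n zero_le = f n := by
  choose ν hν hcomp using hf
  have hν_d : ∀ m n h, Λ.d (ν m n h) = n - m := fun m n h => by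
    have := Λ.d_comp _ _ (hν m n h)
    rw [hcomp, hd, hd] at this
    exact eq_tsub_of_add_eq (by rw [add_comm]; exact this.symm)
  have hν_self : ∀ n, ν n n le_rfl = Λ.s (f n) := fun n =>
    comp_left_cancel ((hcomp n n le_rfl).trans (Λ.comp_id _ (s_eq_r_s _)).symm)
  have hν_s : ∀ m n h, Λ.s (ν m n h) = Λ.s (f n) := fun m n h => by
    rw [← hcomp m n h, Λ.s_comp]
  refine ⟨{ toFun := ν, d_eq := hν_d, src := ?_, rng := ?_, comp_eq := ?_ }, fun n => ?_⟩
  · intro m n h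
    rw [hν_s, hν_self]
  · intro m n h
    rw [hν_self, hν m n h]
  · intro l m n h₁ h₂ hc
    refine comp_left_cancel (μ := f l) (h := by rw [Λ.r_comp]; exact hν _ _ _)
      (h' := hν _ _ _) ?_
    rw [← comp_assoc (hν l m h₁) hc, comp_congr (hcomp l m h₁) rfl (h' := hν m n h₂),
      hcomp, hcomp]
  · have hr : f 0 = Λ.r (ν 0 n zero_le) := by
      rw [← hν, Λ.s_vertex _ (hd 0)]
    calc ν 0 n zero_le
        = Λ.comp (Λ.r (ν 0 n zero_le)) (ν 0 n zero_le) (Λ.s_vertex _ (Λ.d_r _)) :=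
          (Λ.id_comp _ _).symm
      _ = f n := (comp_congr hr.symm rfl).trans (hcomp 0 n zero_le)

theorem exists_toFun_zero_eq_of_directed {ι : Type*} [Preorder ι] [IsDirected ι (· ≤ ·)]
    (g : ι → Λ.Path) (hg : ∀ i j, i ≤ j → Λ.IsPrefix (g i) (g j))
    (hcof : ∀ n, ∃ i, n ≤ Λ.d (g i)) :
    ∃ x : InfinitePath Λ, ∀ i, x.toFun 0 (Λ.d (g i)) zero_le = g i := by
  choose i hi using hcof
  choose f hfg hfd using fun n => exists_isPrefix_of_le (hi n)
  have hf : ∀ m n, m ≤ n → Λ.IsPrefix (f m) (f n) := fun m n hmn => by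
    obtain ⟨j, hmj, hnj⟩ := directed_of (· ≤ ·) (i m) (i n)
    obtain ⟨ρ, hρ, hρd⟩ := exists_isPrefix_of_le ((hfd n).symm ▸ hmn : m ≤ Λ.d (f n))
    have : ρ = f m :=
      ((hρ.trans (hfg n)).trans (hg _ _ hnj)).eq_of_d_eq ((hfg m).trans (hg _ _ hmj))
        (hρd.trans (hfd m).symm)
    exact this ▸ hρ
  obtain ⟨x, hx⟩ := exists_toFun_zero_eq f hfd hf
  refine ⟨x, fun i₀ => (hx _).trans ?_⟩
  obtain ⟨j, h₀j, hj⟩ := directed_of (· ≤ ·) i₀ (i (Λ.d (g i₀)))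
  exact ((hfg _).trans (hg _ _ hj)).eq_of_d_eq (hg _ _ h₀j) (hfd _)

end InfinitePath

namespace KGraph

open InfinitePath

variable {k : ℕ} {Λ : KGraph k}

theorem exists_extEq {lam : Λ.Path} {x : InfinitePath Λ} (hx : x.range = Λ.s lam) :
    ∃ y, Λ.ExtEq lam y x := by
  have hc : ∀ n, Λ.s lam = Λ.r (x.toFun 0 n zero_le) := fun n => ((x.rng _ _ _).trans hx).symm
  set g : (Fin k → ℕ) → Λ.Path := fun n => Λ.comp lam (x.toFun 0 n zero_le) (hc n)
  have hs : ∀ a b (hab : a ≤ b), Λ.s (g a) = Λ.r (x.toFun a b hab) := fun a b hab =>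
    (Λ.s_comp _ _ _).trans (x.s_toFun_eq_r_toFun _ _)
  have hg : ∀ a b hab, Λ.comp (g a) (x.toFun a b hab) (hs a b hab) = g b := fun a b hab =>
    (comp_assoc _ _).trans (comp_congr rfl (x.comp_toFun zero_le hab))
  have hgd : ∀ n, Λ.d (g n) = Λ.d lam + n := fun n => by
    rw [Λ.d_comp, x.d_eq, tsub_zero]
  obtain ⟨y, hy⟩ := exists_toFun_zero_eq_of_directed g (fun a b hab => ⟨_, _, hg a b hab⟩)
    fun n => ⟨n, (hgd n).symm ▸ le_add_self⟩
  have hy' : ∀ n, y.toFun 0 (Λ.d lam + n) zero_le = g n := fun n =>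
    (y.toFun_congr rfl (hgd n).symm).trans (hy n)
  refine ⟨y, ?_, ?_⟩
  · refine ((y.toFun_congr rfl (add_zero _).symm).trans (hy' 0)).trans ?_
    exact (comp_congr rfl hx (h' := s_eq_r_s lam)).trans (Λ.comp_id _ _)
  · ext a b hab
    refine (y.eq_toFun_of_comp_eq _ (ν := x.toFun a b hab)
      (hc := by rw [hy']; exact hs a b hab) ?_).symm
    rw [comp_congr (hy' a) rfl (h' := hs a b hab), hg, hy']

theorem ExtEq.range_eq {lam : Λ.Path} {y x : InfinitePath Λ} (h : Λ.ExtEq lam y x) :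
    y.range = Λ.r lam := by
  rw [← h.1, y.rng]
  rfl

theorem StronglyConnected.exists_toFun_zero_eq_shift_ne (hsc : Λ.StronglyConnected)
    {p q : Fin k → ℕ} {y : InfinitePath Λ} (hy : y.shift p ≠ y.shift q) (μ : Λ.Path) :
    ∃ z : InfinitePath Λ, z.toFun 0 (Λ.d μ) zero_le = μ ∧ z.shift p ≠ z.shift q := by
  obtain ⟨α, hαr, hαs⟩ :=
    hsc (Λ.s μ) y.range (Λ.d_s μ) (by rw [range, y.d_eq, tsub_zero])
  obtain ⟨y₁, hy₁⟩ := exists_extEq hαs.symm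
  obtain ⟨z, hz⟩ := exists_extEq (hy₁.range_eq.trans hαr)
  have hzy : z.shift (Λ.d μ + Λ.d α) = y := by rw [← shift_shift, hz.2, hy₁.2]
  refine ⟨z, hz.1, fun hpq => hy ?_⟩
  calc y.shift p = (z.shift p).shift (Λ.d μ + Λ.d α) := by
        rw [← hzy, shift_shift, shift_shift, add_comm]
    _ = (z.shift q).shift (Λ.d μ + Λ.d α) := by rw [hpq]
    _ = y.shift q := by rw [← hzy, shift_shift, shift_shift, add_comm]

theorem StronglyConnected.exists_isPrefix_forall_shift_ne (hsc : Λ.StronglyConnected)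
    {p q : Fin k → ℕ} {y : InfinitePath Λ} (hy : y.shift p ≠ y.shift q) (μ : Λ.Path) :
    ∃ μ', Λ.IsPrefix μ μ' ∧ Λ.d μ + 1 ≤ Λ.d μ' ∧
      ∀ z : InfinitePath Λ, z.toFun 0 (Λ.d μ') zero_le = μ' → z.shift p ≠ z.shift q := by
  obtain ⟨x, hxμ, hx⟩ := hsc.exists_toFun_zero_eq_shift_ne hy μ
  obtain ⟨N, hN, hxN⟩ := exists_forall_shift_ne_of_toFun_zero_eq hx (Λ.d μ + 1)
  have hd : Λ.d (x.toFun 0 N zero_le) = N := by rw [x.d_eq, tsub_zero]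
  refine ⟨x.toFun 0 N zero_le, hxμ ▸ x.isPrefix_toFun_zero (le_self_add.trans hN),
    hN.trans hd.ge, fun z hz => hxN z ((z.toFun_congr rfl hd.symm).trans hz)⟩

theorem StronglyConnected.aperiodic_of_forall_exists_shift_ne (hsc : Λ.StronglyConnected)
    (h : ∀ p q : Fin k → ℕ, p ≠ q → ∃ y : InfinitePath Λ, y.shift p ≠ y.shift q) :
    Λ.Aperiodic := by
  intro v hv
  rcases isEmpty_or_nonempty (Fin k) with hk | hk
  · obtain ⟨x, hx⟩ := exists_toFun_zero_eq_of_directed (ι := ℕ) (fun _ => v)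
      (fun _ _ _ => IsPrefix.rfl) fun _ => ⟨0, (Subsingleton.elim _ _).le⟩
    exact ⟨x, (x.toFun_congr rfl hv.symm).trans (hx 0),
      fun m n hmn => absurd (Subsingleton.elim m n) hmn⟩
  let P := {pq : (Fin k → ℕ) × (Fin k → ℕ) // pq.1 ≠ pq.2}
  have : Nonempty P := ⟨⟨(0, 1), fun h => zero_ne_one (congrFun h (Classical.arbitrary _))⟩⟩
  obtain ⟨e, he⟩ := exists_surjective_nat P
  choose next hnext_pre hnext_d hnext using fun (μ : Λ.Path) (pq : P) =>
    hsc.exists_isPrefix_forall_shift_ne (h _ _ pq.2).choose_spec μ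
  let μ : ℕ → Λ.Path := fun j => Nat.rec v (fun j μj => next μj (e j)) j
  have hmono : ∀ i j, i ≤ j → Λ.IsPrefix (μ i) (μ j) :=
    Nat.rel_of_forall_rel_succ_of_le _ fun j => hnext_pre _ _
  have hdeg : ∀ j : ℕ, (fun _ => j) ≤ Λ.d (μ j) := by
    intro j
    induction j with
    | zero => exact zero_le
    | succ j ih => exact fun i => (Nat.succ_le_succ (ih i)).trans (hnext_d (μ j) (e j) i)
  obtain ⟨x, hx⟩ := exists_toFun_zero_eq_of_directed μ hmono
    fun n => ⟨Finset.univ.sup n, fun i => (Finset.le_sup (Finset.mem_univ i)).trans (hdeg _ i)⟩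
  refine ⟨x, (x.toFun_congr rfl hv.symm).trans (hx 0), fun p q hpq => ?_⟩
  obtain ⟨j, hj⟩ := he ⟨(p, q), hpq⟩
  have := hnext (μ j) (e j) x (hx (j + 1))
  rwa [hj] at this

theorem per_eq_zero_iff :
    Λ.Per = {0} ↔
      ∀ p q : Fin k → ℕ, (∀ x : InfinitePath Λ, x.shift p = x.shift q) → p = q := by
  constructor
  · intro h p q hpq
    have hmem : (fun i => (p i : ℤ) - q i) ∈ Λ.Per := ⟨p, q, fun _ => rfl, hpq⟩
    rw [h] at hmem
    funext i
    simpa only [Pi.zero_apply, sub_eq_zero, Nat.cast_inj] using congrFun hmem i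
  · intro h
    ext g
    constructor
    · rintro ⟨p, q, hg, hpq⟩
      funext i
      rw [← hg, h p q hpq, sub_self, Pi.zero_apply]
    · rintro rfl
      exact ⟨0, 0, fun _ => sub_self _, fun _ => rfl⟩

theorem Aperiodic.eq_of_forall_shift_eq (hap : Λ.Aperiodic) {p q : Fin k → ℕ}
    (h : ∀ x : InfinitePath Λ, x.shift p = x.shift q) : p = q := by
  by_contra hpq
  obtain ⟨i, -⟩ := Function.ne_iff.mp hpq
  obtain ⟨lam, -⟩ := Λ.edge_nonempty i
  obtain ⟨x, -, hx⟩ := hap (Λ.r lam) (Λ.d_r lam)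
  exact hx p q hpq (h x)

end KGraph

theorem aperiodic_iff_per_trivial_general {k : ℕ} (Λ : KGraph k)
    (hsc : Λ.StronglyConnected) :
    Λ.Aperiodic ↔ Λ.Per = {0} := by
  rw [KGraph.per_eq_zero_iff]
  refine ⟨fun hap _ _ => hap.eq_of_forall_shift_eq, fun h => ?_⟩
  refine hsc.aperiodic_of_forall_exists_shift_ne fun p q hpq => ?_
  by_contra! hall
  exact hpq (h p q hall)

/-- A strongly connected finite `k`-graph is aperiodic iff `Per Λ = {0}`. -/
theorem aperiodic_iff_per_trivial {k : ℕ} (Λ : KGraph k)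
    (hfin : Λ.IsFinite) (hsc : Λ.StronglyConnected) :
    Λ.Aperiodic ↔ Λ.Per = {0} :=
  aperiodic_iff_per_trivial_general Λ hsc
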